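/- arXiv:2104.01453 — 3 statements merged into one kernel-verified Lean document; each statement's English description precedes it below -/
import Mathlib

section
/- Let p be a prime, let k ≥ 2 and c be integers, and let a, b ∈ ℤ_p with a ≠ b. Then the number of tuples (x_1,...,x_k) ∈ (ℤ_p \ {a, b})^k with x_1 + ... + x_k ≡ c (mod p) equals ((−1)^k / p) · ( p · Σ_{0 ≤ j ≤ k, (a−b) j ≡ c − bk (mod p)} C(k, j) + (2 − p)^k − 2^k ). -/
/-!
Let `N_k(c)` count the `k`-tuples in a finite abelian group of order `n` that avoid a set `S` of
size `s` and sum to `c`, and `T_k(c)` those with all entries in `S`. Splitting off the first entry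
gives `T_{k+1}(c) = ∑_{z ∈ S} T_k(c - z)` and, since all `(n - s)^k` avoiding tuples of length `k`
are spread over the values `c - z`, `N_{k+1}(c) = (n - s)^k - ∑_{z ∈ S} N_k(c - z)`. Induction then
gives `n N_k(c) = (-1)^k (n T_k(c) + (s - n)^k - s^k)`. For `S = {a, b}` a tuple in `S` is the set
of positions where it equals `a`, so `T_k(c)` is the binomial sum. Integer tuples with entries in
`[0, p)` are exactly the tuples of residues mod `p`.
-/

open Finset

section TupleSums

variable {G : Type*} [AddCommGroup G]

lemma sum_ite_mem_eq_card_smul_sub_add {ι : Type*} [Fintype ι] [DecidableEq ι] (t : Finset ι)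
    (A B : G) : ∑ i, (if i ∈ t then A else B) = #t • (A - B) + Fintype.card ι • B := by
  have h : ∀ i, (if i ∈ t then A else B) = (if i ∈ t then A - B else 0) + B := by
    intro i; split_ifs <;> simp
  simp only [h, sum_add_distrib, sum_ite_mem, univ_inter, sum_const, card_univ]

variable [DecidableEq G]

def tupleSumCount (S : Finset G) (k : ℕ) (c : G) : ℕ :=
  #{y ∈ Fintype.piFinset fun _ : Fin k => S | ∑ i, y i = c}

lemma tupleSumCount_eq_natCard [Fintype G] (S : Finset G) (k : ℕ) (c : G) :
    tupleSumCount S k c = Nat.card {y : Fin k → G // (∀ i, y i ∈ S) ∧ ∑ i, y i = c} := by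
  rw [Nat.card_eq_fintype_card, Fintype.card_subtype, tupleSumCount]
  congr 1
  ext y
  simp

lemma tupleSumCount_zero (S : Finset G) (c : G) :
    tupleSumCount S 0 c = if c = 0 then 1 else 0 := by
  split_ifs with hc <;> simp [tupleSumCount, Fintype.piFinset_of_isEmpty, eq_comm, hc]

lemma tupleSumCount_succ (S : Finset G) (k : ℕ) (c : G) :
    tupleSumCount S (k + 1) c = ∑ z ∈ S, tupleSumCount S k (c - z) := by
  have h := filter_piFinset_eq_map_consEquiv (fun _ : Fin (k + 1) => S) (fun _ => True)
  simp only [filter_true] at h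
  rw [tupleSumCount, h, filter_map, card_map, card_filter, sum_product]
  refine sum_congr rfl fun z _ => ?_
  rw [tupleSumCount, card_filter]
  refine sum_congr rfl fun y _ => ?_
  simp [Fin.sum_cons, eq_sub_iff_add_eq']

lemma tupleSumCount_pair_eq_card_powerset {A B : G} (hAB : A ≠ B) (k : ℕ) (c : G) :
    tupleSumCount {A, B} k c =
      #{t ∈ (univ : Finset (Fin k)).powerset | #t • (A - B) + k • B = c} := by
  have hdecode : ∀ y ∈ Fintype.piFinset fun _ : Fin k => ({A, B} : Finset G),
      (fun i => if i ∈ ({i | y i = A} : Finset (Fin k)) then A else B) = y := by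
    intro y hy
    funext i
    rcases mem_insert.1 (Fintype.mem_piFinset.1 hy i) with h | h <;> simp_all [hAB.symm]
  refine card_nbij' (fun y => ({i | y i = A} : Finset (Fin k)))
    (fun t i => if i ∈ t then A else B) ?_ ?_ ?_ ?_
  · intro y hy
    simp only [coe_filter, Set.mem_ofPred_eq, mem_powerset, subset_univ, true_and] at hy ⊢
    have h := sum_ite_mem_eq_card_smul_sub_add ({i | y i = A} : Finset (Fin k)) A B
    rw [hdecode y hy.1, Fintype.card_fin] at h
    rw [← h, hy.2]
  · intro t ht
    simp only [coe_filter, Set.mem_ofPred_eq, mem_powerset, subset_univ, true_and,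
      Fintype.mem_piFinset] at ht ⊢
    refine ⟨fun i => by by_cases h : i ∈ t <;> simp [h], ?_⟩
    rw [sum_ite_mem_eq_card_smul_sub_add, Fintype.card_fin, ht]
  · intro y hy
    exact hdecode y (mem_filter.1 hy).1
  · intro t _
    ext i
    by_cases h : i ∈ t <;> simp [h, hAB.symm]

theorem tupleSumCount_pair {A B : G} (hAB : A ≠ B) (k : ℕ) (c : G) :
    tupleSumCount {A, B} k c =
      ∑ j ∈ range (k + 1), if j • (A - B) + k • B = c then k.choose j else 0 := by
  rw [tupleSumCount_pair_eq_card_powerset hAB, card_filter,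
    sum_powerset_apply_card (fun j => if j • (A - B) + k • B = c then 1 else 0),
    card_univ, Fintype.card_fin]
  simp

variable [Fintype G]

lemma sum_tupleSumCount (S : Finset G) (k : ℕ) :
    ∑ c, tupleSumCount S k c = #S ^ k := by
  simp only [tupleSumCount]
  rw [← card_eq_sum_card_fiberwise (fun _ _ => mem_univ _), Fintype.card_piFinset_const]

lemma sum_tupleSumCount_sub (S : Finset G) (k : ℕ) (c : G) :
    ∑ z, tupleSumCount S k (c - z) = #S ^ k := by
  rw [← sum_tupleSumCount S k]
  exact Fintype.sum_equiv (Equiv.subLeft c) _ _ fun _ => rfl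

lemma tupleSumCount_compl_succ (S : Finset G) (k : ℕ) (c : G) :
    (tupleSumCount Sᶜ (k + 1) c : ℤ) =
      (Fintype.card G - #S) ^ k - ∑ z ∈ S, (tupleSumCount Sᶜ k (c - z) : ℤ) := by
  rw [tupleSumCount_succ, eq_sub_iff_add_eq, Nat.cast_sum, sum_compl_add_sum,
    ← Nat.cast_sum, sum_tupleSumCount_sub, card_compl, Nat.cast_pow,
    Nat.cast_sub (card_le_univ S)]

theorem card_mul_tupleSumCount_compl (S : Finset G) (k : ℕ) (c : G) :
    (Fintype.card G * tupleSumCount Sᶜ k c : ℤ) =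
      (-1) ^ k * (Fintype.card G * tupleSumCount S k c + (#S - Fintype.card G) ^ k - #S ^ k) := by
  set n : ℤ := (Fintype.card G : ℤ)
  set s : ℤ := (#S : ℤ)
  induction k generalizing c with
  | zero => simp [tupleSumCount_zero]
  | succ k ih =>
    have hsign : (n - s) ^ k = (-1) ^ k * (s - n) ^ k := by rw [← mul_pow]; ring
    calc n * tupleSumCount Sᶜ (k + 1) c
        = n * (n - s) ^ k - ∑ z ∈ S, n * tupleSumCount Sᶜ k (c - z) := by
          rw [tupleSumCount_compl_succ, mul_sub, mul_sum]
      _ = n * (n - s) ^ k - ∑ z ∈ S,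
            (-1) ^ k * (n * tupleSumCount S k (c - z) + (s - n) ^ k - s ^ k) := by
          simp only [ih]
      _ = (-1) ^ (k + 1) * (n * tupleSumCount S (k + 1) c + (s - n) ^ (k + 1) - s ^ (k + 1)) := by
          rw [tupleSumCount_succ, hsign]
          simp only [← mul_sum, sum_sub_distrib, sum_add_distrib, sum_const, nsmul_eq_mul]
          push_cast
          ring

end TupleSums

section Residues

variable {p : ℕ}

lemma ZMod.intCast_eq_intCast_iff_of_mem_Ico [NeZero p] {x y : ℤ} (hx : 0 ≤ x ∧ x < p)
    (hy : 0 ≤ y ∧ y < p) : (x : ZMod p) = y ↔ x = y := by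
  rw [ZMod.intCast_eq_intCast_iff', Int.emod_eq_of_lt hx.1 hx.2, Int.emod_eq_of_lt hy.1 hy.2]

lemma natCard_intTuple_Ico_eq {ι : Type*} [NeZero p] (R : (ι → ZMod p) → Prop) :
    Nat.card {x : ι → ℤ // (∀ i, 0 ≤ x i ∧ x i < p) ∧ R fun i => x i} =
      Nat.card {y : ι → ZMod p // R y} :=
  Nat.card_congr
    { toFun x := ⟨fun i => x.1 i, x.2.2⟩
      invFun y := ⟨fun i => (y.1 i).val,
        fun i => ⟨Int.natCast_nonneg _, Int.ofNat_lt.2 (y.1 i).val_lt⟩, by simpa using y.2⟩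
      left_inv x := by
        ext i
        exact (ZMod.val_intCast _).trans (Int.emod_eq_of_lt (x.2.1 i).1 (x.2.1 i).2)
      right_inv y := by ext i; simp }

lemma intTuple_avoiding_iff [NeZero p] {ι : Type*} [Fintype ι] {a b c : ℤ}
    (ha : 0 ≤ a ∧ a < p) (hb : 0 ≤ b ∧ b < p) (x : ι → ℤ) :
    ((∀ i, 0 ≤ x i ∧ x i < p ∧ x i ≠ a ∧ x i ≠ b) ∧ (p : ℤ) ∣ (∑ i, x i) - c) ↔
      (∀ i, 0 ≤ x i ∧ x i < p) ∧
        (∀ i, (x i : ZMod p) ∈ ({(a : ZMod p), (b : ZMod p)} : Finset (ZMod p))ᶜ) ∧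
          ∑ i, (x i : ZMod p) = c := by
  have hne : ∀ i, 0 ≤ x i ∧ x i < p →
      ((x i : ZMod p) ∈ ({(a : ZMod p), (b : ZMod p)} : Finset (ZMod p))ᶜ ↔ x i ≠ a ∧ x i ≠ b) :=
    fun i hx => by
      simp [ZMod.intCast_eq_intCast_iff_of_mem_Ico hx ha,
        ZMod.intCast_eq_intCast_iff_of_mem_Ico hx hb]
  rw [← Int.cast_sum, eq_comm, ZMod.intCast_eq_intCast_iff_dvd_sub]
  constructor
  · rintro ⟨hx, hdvd⟩
    exact ⟨fun i => ⟨(hx i).1, (hx i).2.1⟩, fun i => (hne i ⟨(hx i).1, (hx i).2.1⟩).2 (hx i).2.2,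
      hdvd⟩
  · rintro ⟨hx, hmem, hdvd⟩
    exact ⟨fun i => ⟨(hx i).1, (hx i).2, (hne i (hx i)).1 (hmem i)⟩, hdvd⟩

lemma natCard_avoiding_eq_tupleSumCount [NeZero p] {a b : ℤ} (ha : 0 ≤ a ∧ a < p)
    (hb : 0 ≤ b ∧ b < p) (k : ℕ) (c : ℤ) :
    Nat.card {x : Fin k → ℤ // (∀ i, 0 ≤ x i ∧ x i < p ∧ x i ≠ a ∧ x i ≠ b) ∧
      (p : ℤ) ∣ (∑ i, x i) - c} = tupleSumCount ({(a : ZMod p), (b : ZMod p)}ᶜ) k c := by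
  rw [Nat.card_congr (Equiv.subtypeEquivRight (intTuple_avoiding_iff ha hb)),
    natCard_intTuple_Ico_eq (fun y => (∀ i, y i ∈ ({(a : ZMod p), (b : ZMod p)} : Finset _)ᶜ) ∧
      ∑ i, y i = c), tupleSumCount_eq_natCard]

end Residues

theorem count_sum_avoiding_two_general (p : ℕ) (k : ℕ) (c : ℤ)
    (a b : ℤ) (ha : 0 ≤ a) (ha' : a < p) (hb : 0 ≤ b) (hb' : b < p) (hab : a ≠ b) :
    (Nat.card {x : Fin k → ℤ //
        (∀ i, 0 ≤ x i ∧ x i < p ∧ x i ≠ a ∧ x i ≠ b) ∧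
        (p : ℤ) ∣ (∑ i, x i) - c} : ℚ) =
      ((-1 : ℚ) ^ k / p) *
        ((p : ℚ) *
          (∑ j ∈ Finset.range (k + 1),
            if (p : ℤ) ∣ ((a - b) * j - (c - b * k)) then (k.choose j : ℚ) else 0) +
          (2 - (p : ℚ)) ^ k - 2 ^ k) := by
  have : NeZero p := ⟨by omega⟩
  have hAB : (a : ZMod p) ≠ b := by
    rwa [Ne, ZMod.intCast_eq_intCast_iff_of_mem_Ico ⟨ha, ha'⟩ ⟨hb, hb'⟩]
  have hcond : ∀ j : ℕ, j • ((a : ZMod p) - b) + k • (b : ZMod p) = c ↔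
      (p : ℤ) ∣ (a - b) * j - (c - b * k) := by
    intro j
    rw [← ZMod.intCast_zmod_eq_zero_iff_dvd]
    constructor <;> intro h <;> push_cast at h ⊢ <;> linear_combination h
  have hmain := card_mul_tupleSumCount_compl ({(a : ZMod p), (b : ZMod p)}) k c
  rw [ZMod.card, card_pair hAB, tupleSumCount_pair hAB] at hmain
  simp only [hcond] at hmain
  rw [natCard_avoiding_eq_tupleSumCount ⟨ha, ha'⟩ ⟨hb, hb'⟩]
  have hq := congrArg (Int.cast : ℤ → ℚ) hmain
  push_cast at hq
  have hp0 : (p : ℚ) ≠ 0 := Nat.cast_ne_zero.2 (NeZero.ne p)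
  field_simp
  linear_combination hq

theorem count_sum_avoiding_two (p : ℕ) (hp : p.Prime) (k : ℕ) (hk : 2 ≤ k) (c : ℤ)
    (a b : ℤ) (ha : 0 ≤ a) (ha' : a < p) (hb : 0 ≤ b) (hb' : b < p) (hab : a ≠ b) :
    (Nat.card {x : Fin k → ℤ //
        (∀ i, 0 ≤ x i ∧ x i < p ∧ x i ≠ a ∧ x i ≠ b) ∧
        (p : ℤ) ∣ (∑ i, x i) - c} : ℚ) =
      ((-1 : ℚ) ^ k / p) *
        ((p : ℚ) *
          (∑ j ∈ Finset.range (k + 1),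
            if (p : ℤ) ∣ ((a - b) * j - (c - b * k)) then (k.choose j : ℚ) else 0) +
          (2 - (p : ℚ)) ^ k - 2 ^ k) :=
  count_sum_avoiding_two_general p k c a b ha ha' hb hb' hab
end

section
/- Let p be a prime, let k ≥ 2 and c be integers, and let f(x) = ax + b ∈ ℤ[x] with gcd(a, p) = 1. Let a^{-1} be an integer with a·a^{-1} ≡ 1 (mod p). Then 𝓜_{k,f,c}(p) = p^{k-1} − (p−1)^{k-1} + N(k−1, c + k·b·a^{-1}, p), where N(k−1, c', p) denotes the number of tuples (y_1,...,y_{k-1}) with each y_i ∈ ℤ_p coprime to p and y_1 + ... + y_{k-1} ≡ c' (mod p). -/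
/-!
Everything happens in `ZMod p`, where `a` is invertible. The substitution `z = x + a⁻¹ b` turns
`f(x_1) ⋯ f(x_{k-1}) f(c - Σ x_i)` into `a^k · z_1 ⋯ z_{k-1} · (c' - Σ z_i)` with
`c' = c + k a⁻¹ b`. A tuple `z` misses this zero set exactly when all `z_i` are units and
`Σ z_i ≠ c'`, so the complement has `(p - 1)^{k-1} - N(k - 1, c', p)` elements.
-/

open Polynomial

/-- `Mcount k f c p` is the number of tuples `(x_1,...,x_{k-1}) ∈ {0,...,p-1}^{k-1}` with
`f(x_1) ⋯ f(x_{k-1}) · f(c - x_1 - ... - x_{k-1}) ≡ 0 (mod p)`. -/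
noncomputable def Mcount (k : ℕ) (f : Polynomial ℤ) (c : ℤ) (p : ℕ) : ℕ :=
  Nat.card {x : Fin (k - 1) → ℤ //
    (∀ i, 0 ≤ x i ∧ x i < p) ∧
    (p : ℤ) ∣ (∏ i, f.eval (x i)) * f.eval (c - ∑ i, x i)}

/-- `Nunits r c' p` is the number of tuples `(y_1,...,y_r) ∈ {0,...,p-1}^r` with each `y_i`
coprime to `p` and `y_1 + ... + y_r ≡ c' (mod p)`. -/
noncomputable def Nunits (r : ℕ) (c' : ℤ) (p : ℕ) : ℕ :=
  Nat.card {y : Fin r → ℤ //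
    (∀ i, 0 ≤ y i ∧ y i < p ∧ Int.gcd (y i) p = 1) ∧
    (p : ℤ) ∣ (∑ i, y i) - c'}

theorem Nat.card_int_box_eq_card_zmod {ι : Type*} (p : ℕ) [NeZero p]
    (P : (ι → ZMod p) → Prop) :
    Nat.card {x : ι → ℤ // (∀ i, 0 ≤ x i ∧ x i < p) ∧ P (fun i => (x i : ZMod p))} =
      Nat.card {z : ι → ZMod p // P z} := by
  refine Nat.card_congr
    { toFun := fun x => ⟨fun i => x.1 i, x.2.2⟩
      invFun := fun z => ⟨fun i => (z.1 i).val,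
        fun i => ⟨by positivity, Int.ofNat_lt.2 (z.1 i).val_lt⟩,
        by simpa only [Int.cast_natCast, ZMod.natCast_zmod_val] using z.2⟩
      left_inv := fun x => ?_
      right_inv := fun z => by ext i; simp }
  ext i
  change ((x.1 i : ZMod p).val : ℤ) = x.1 i
  rw [ZMod.val_intCast, Int.emod_eq_of_lt (x.2.1 i).1 (x.2.1 i).2]

theorem Mcount_eq_card_zmod (k : ℕ) (f : ℤ[X]) (c : ℤ) (p : ℕ) [NeZero p] :
    Mcount k f c p = Nat.card {z : Fin (k - 1) → ZMod p //
      (∏ i, (f.map (Int.castRingHom (ZMod p))).eval (z i)) *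
        (f.map (Int.castRingHom (ZMod p))).eval (c - ∑ i, z i) = 0} := by
  rw [Mcount, ← Nat.card_int_box_eq_card_zmod]
  refine Nat.card_congr (Equiv.subtypeEquivRight fun x => and_congr_right fun _ => ?_)
  rw [← ZMod.intCast_zmod_eq_zero_iff_dvd]
  simp only [← Int.cast_sum, ← Int.cast_sub, eval_intCast_map, Int.coe_castRingHom, Int.cast_id,
    Int.cast_mul, Int.cast_prod]

theorem Nunits_eq_card_zmod (r : ℕ) (c : ℤ) (p : ℕ) [Fact p.Prime] :
    Nunits r c p = Nat.card {z : Fin r → ZMod p // (∀ i, z i ≠ 0) ∧ ∑ i, z i = c} := by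
  rw [Nunits, ← Nat.card_int_box_eq_card_zmod]
  refine Nat.card_congr (Equiv.subtypeEquivRight fun y => ?_)
  simp only [ZMod.eq_zero_iff_gcd_ne_one, ne_eq, not_not, ← ZMod.intCast_zmod_eq_zero_iff_dvd,
    Int.cast_sub, Int.cast_sum, sub_eq_zero]
  exact ⟨fun ⟨h, hs⟩ => ⟨fun i => ⟨(h i).1, (h i).2.1⟩, fun i => (h i).2.2, hs⟩,
    fun ⟨h, hu, hs⟩ => ⟨fun i => ⟨(h i).1, (h i).2, hu i⟩, hs⟩⟩

theorem Nat.card_pi_ne_zero {ι K : Type*} [Fintype ι] [GroupWithZero K] [Finite K] :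
    Nat.card {z : ι → K // ∀ i, z i ≠ 0} = (Nat.card K - 1) ^ Fintype.card ι := by
  rw [Nat.card_congr (Equiv.subtypePiEquivPi (p := fun _ u => u ≠ 0)), Nat.card_pi,
    ← Nat.card_congr unitsEquivNeZero, Nat.card_units, Finset.prod_const, Finset.card_univ]

theorem card_prod_mul_sub_sum_eq_zero {ι K : Type*} [Fintype ι] [Field K] [Fintype K] (c : K) :
    (Nat.card {z : ι → K // (∏ i, z i) * (c - ∑ i, z i) = 0} : ℤ) =
      (Fintype.card K : ℤ) ^ Fintype.card ι - ((Fintype.card K : ℤ) - 1) ^ Fintype.card ι +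
        Nat.card {z : ι → K // (∀ i, z i ≠ 0) ∧ ∑ i, z i = c} := by
  classical
  have h_compl : ∀ z : ι → K,
      ¬(∏ i, z i) * (c - ∑ i, z i) = 0 ↔ (∀ i, z i ≠ 0) ∧ ¬∑ i, z i = c := by
    intro z
    simp [Finset.prod_eq_zero_iff, sub_eq_zero, eq_comm]
  have h_units := Nat.card_pi_ne_zero (ι := ι) (K := K)
  simp only [Nat.card_eq_fintype_card, Fintype.card_subtype] at h_units ⊢
  have h_total := Finset.card_filter_add_card_filter_not
    (s := (Finset.univ : Finset (ι → K))) (fun z => (∏ i, z i) * (c - ∑ i, z i) = 0)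
  have h_split := Finset.card_filter_add_card_filter_not
    (s := Finset.univ.filter fun z : ι → K => ∀ i, z i ≠ 0) (fun z => ∑ i, z i = c)
  simp only [Finset.filter_filter, h_compl, Finset.card_univ, Fintype.card_fun] at h_total h_split
  have hK : 1 ≤ Fintype.card K := Fintype.card_pos
  rw [h_units] at h_split
  zify [hK] at h_total h_split
  linarith

section LinearShift

variable {ι K : Type*} [Fintype ι] [Field K] {a : K} (b c : K)

theorem prod_linear_mul_linear_sub_sum (ha : a ≠ 0) (z : ι → K) :
    (∏ i, (a * z i + b)) * (a * (c - ∑ i, z i) + b) =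
      a ^ (Fintype.card ι + 1) * ((∏ i, (z i + a⁻¹ * b)) *
        (c + (Fintype.card ι + 1) * (a⁻¹ * b) - ∑ i, (z i + a⁻¹ * b))) := by
  have h_factor : ∀ t, a * t + b = a * (t + a⁻¹ * b) := fun t => by
    rw [mul_add, mul_inv_cancel_left₀ ha]
  simp only [h_factor, Finset.prod_mul_distrib, Finset.prod_const, Finset.card_univ,
    Finset.sum_add_distrib, Finset.sum_const, nsmul_eq_mul, pow_succ]
  ring

theorem card_prod_linear_mul_linear_sub_sum_eq_zero (ha : a ≠ 0) :
    Nat.card {z : ι → K // (∏ i, (a * z i + b)) * (a * (c - ∑ i, z i) + b) = 0} =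
      Nat.card {w : ι → K //
        (∏ i, w i) * (c + (Fintype.card ι + 1) * (a⁻¹ * b) - ∑ i, w i) = 0} :=
  Nat.card_congr <| Equiv.subtypeEquiv (Equiv.piCongrRight fun _ => Equiv.addRight (a⁻¹ * b))
    fun z => by simp [prod_linear_mul_linear_sub_sum b c ha, ha]

end LinearShift

theorem Mcount_linear_via_units_general (p : ℕ) (hp : p.Prime) (k : ℕ) (hk : 2 ≤ k) (c : ℤ)
    (a b ainv : ℤ) (hainv : (p : ℤ) ∣ a * ainv - 1) :
    (Mcount k (C a * X + C b) c p : ℤ) =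
      (p : ℤ) ^ (k - 1) - ((p : ℤ) - 1) ^ (k - 1) +
        Nunits (k - 1) (c + k * b * ainv) p := by
  have : Fact p.Prime := ⟨hp⟩
  have h_inv : (a : ZMod p) * ainv = 1 := by
    simpa [sub_eq_zero] using (ZMod.intCast_zmod_eq_zero_iff_dvd _ p).2 hainv
  have ha : (a : ZMod p) ≠ 0 := left_ne_zero_of_mul_eq_one h_inv
  have hc : ((c + k * b * ainv : ℤ) : ZMod p) =
      c + ((k - 1 : ℕ) + 1) * ((a : ZMod p)⁻¹ * b) := by
    rw [← eq_inv_of_mul_eq_one_right h_inv, Nat.cast_pred (by omega)]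
    push_cast
    ring
  rw [Mcount_eq_card_zmod, Nunits_eq_card_zmod, hc]
  simp only [Polynomial.map_add, Polynomial.map_mul, Polynomial.map_C, Polynomial.map_X, eval_add,
    eval_mul, eval_C, eval_X, Int.coe_castRingHom]
  rw [card_prod_linear_mul_linear_sub_sum_eq_zero _ _ ha, card_prod_mul_sub_sum_eq_zero,
    ZMod.card, Fintype.card_fin]

theorem Mcount_linear_via_units (p : ℕ) (hp : p.Prime) (k : ℕ) (hk : 2 ≤ k) (c : ℤ)
    (a b ainv : ℤ) (ha : Int.gcd a p = 1) (hainv : (p : ℤ) ∣ a * ainv - 1) :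
    (Mcount k (C a * X + C b) c p : ℤ) =
      (p : ℤ) ^ (k - 1) - ((p : ℤ) - 1) ^ (k - 1) +
        Nunits (k - 1) (c + k * b * ainv) p :=
  Mcount_linear_via_units_general p hp k hk c a b ainv hainv
end

section
/- Let n ≥ 1, k ≥ 2 and c be integers, and let f(x) = x(1 − x). Then the number of tuples (x_1,...,x_k) with each x_i an exceptional unit in ℤ_n (i.e., gcd(x_i(1 − x_i), n) = 1) and x_1 + ... + x_k ≡ c (mod n) equals (−1)^{kω(n)} · ∏_{p | n} p^{kν_p(n) − ν_p(n) − k} · ( p · Σ_{0 ≤ j ≤ k, j ≡ c (mod p)} C(k, j) + (2 − p)^k − 2^k ), where the product runs over prime divisors p of n. -/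
/-!
Counting `k`-tuples of exceptional units with prescribed sum is multiplicative under the
Chinese remainder theorem, so it suffices to treat `ℤ_{p^e}`. Reduction modulo `p` is a local
ring map, so exceptionality only depends on the residue mod `p`; peeling off the first coordinate
of a tuple and summing over it, every coordinate except the one forced by the sum contributes a
factor `p^(e-1)`. Over a finite field with `q` elements the exceptional units are all elements
except `0` and `1`, so the counts satisfy `N_{k+1}(c) = (q-2)^k - N_k(c) - N_k(c-1)`, which
together with Pascal's rule for `∑_{j ≡ c} C(k, j)` gives the closed formula by induction on `k`.
-/

open Finset

def IsExceptionalUnit {R : Type*} [CommRing R] (a : R) : Prop :=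
  IsUnit (a * (1 - a))

noncomputable def exceptionalSumCount (R : Type*) [CommRing R] (k : ℕ) (c : R) : ℕ :=
  Nat.card {y : Fin k → R // (∀ i, IsExceptionalUnit (y i)) ∧ ∑ i, y i = c}

section CommRing

variable {R S : Type*} [CommRing R] [CommRing S]

lemma isExceptionalUnit_map_iff {F : Type*} [FunLike F R S] [RingHomClass F R S] (f : F)
    [IsLocalHom f] (a : R) : IsExceptionalUnit (f a) ↔ IsExceptionalUnit a := by
  rw [IsExceptionalUnit, IsExceptionalUnit, ← isUnit_map_iff f, map_mul, map_sub, map_one]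

lemma exceptionalSumCount_ringEquiv (e : R ≃+* S) (k : ℕ) (c : R) :
    exceptionalSumCount S k (e c) = exceptionalSumCount R k c := by
  refine (Nat.card_congr (Equiv.subtypeEquiv (Equiv.piCongrRight fun _ => e.toEquiv) ?_)).symm
  intro y
  simp [isExceptionalUnit_map_iff, ← map_sum, e.injective.eq_iff]

lemma exceptionalSumCount_zero [DecidableEq R] (c : R) :
    exceptionalSumCount R 0 c = if c = 0 then 1 else 0 := by
  split_ifs with h <;> simp [exceptionalSumCount, h, Ne.symm]

open Classical in
lemma exceptionalSumCount_succ [Fintype R] (k : ℕ) (c : R) :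
    exceptionalSumCount R (k + 1) c =
      ∑ a : R, if IsExceptionalUnit a then exceptionalSumCount R k (c - a) else 0 := by
  let e : {y : Fin (k + 1) → R // (∀ i, IsExceptionalUnit (y i)) ∧ ∑ i, y i = c} ≃
      Σ a : {a : R // IsExceptionalUnit a},
        {z : Fin k → R // (∀ i, IsExceptionalUnit (z i)) ∧ ∑ i, z i = c - a} :=
    { toFun := fun y => ⟨⟨y.1 0, y.2.1 0⟩, Fin.tail y.1, fun i => y.2.1 i.succ,
        eq_sub_iff_add_eq'.mpr ((Fin.sum_univ_succ y.1).symm.trans y.2.2)⟩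
      invFun := fun az => ⟨Fin.cons az.1.1 az.2.1, Fin.cases az.1.2 az.2.2.1, by
        rw [Fin.sum_univ_succ]; simp [az.2.2.2]⟩
      left_inv := fun y => Subtype.ext (Fin.cons_self_tail y.1)
      right_inv := fun _ => rfl }
  rw [exceptionalSumCount, Nat.card_congr e, Nat.card_sigma, ← sum_filter]
  exact (sum_subtype _ mem_filter_univ fun a => exceptionalSumCount R k (c - a)).symm

open Classical in
lemma exceptionalSumCount_one [Fintype R] (c : R) :
    exceptionalSumCount R 1 c = if IsExceptionalUnit c then 1 else 0 := by
  rw [exceptionalSumCount_succ, Fintype.sum_eq_single c fun a ha => by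
    simp [exceptionalSumCount_zero, sub_eq_zero, Ne.symm ha]]
  simp [exceptionalSumCount_zero]

end CommRing

lemma exceptionalSumCount_pi {ι : Type*} [Fintype ι] {R : ι → Type*} [∀ i, CommRing (R i)]
    (k : ℕ) (c : ∀ i, R i) :
    exceptionalSumCount (∀ i, R i) k c = ∏ i, exceptionalSumCount (R i) k (c i) := by
  simp only [exceptionalSumCount]
  rw [← Nat.card_pi]
  refine Nat.card_congr ((Equiv.subtypeEquiv (Equiv.piComm _) fun y => ?_).trans
    (Equiv.subtypePiEquivPi (p := fun i (z : Fin k → R i) =>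
      (∀ j, IsExceptionalUnit (z j)) ∧ ∑ j, z j = c i)))
  simp only [IsExceptionalUnit, Pi.isUnit_iff, funext_iff, Finset.sum_apply]
  exact ⟨fun h i => ⟨fun j => h.1 j i, h.2 i⟩, fun h => ⟨fun j i => (h i).1 j, fun i => (h i).2⟩⟩

lemma AddMonoidHom.sum_comp_of_surjective {G H M : Type*} [AddGroup G] [AddGroup H] [Fintype G]
    [Fintype H] [AddCommMonoid M] (f : G →+ H) (hf : Function.Surjective f) {m : ℕ}
    (hm : Fintype.card G = m * Fintype.card H) (g : H → M) :
    ∑ a, g (f a) = m • ∑ b, g b := by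
  classical
  have hfiber : ∀ b, #{a | f a = b} = #{a | f a = 0} := fun b =>
    card_fiber_eq_of_mem_range f (hf b) (hf 0)
  have hcard : Fintype.card G = #{a | f a = 0} * Fintype.card H := by
    rw [← card_univ, card_eq_sum_card_fiberwise (f := f) (t := univ) fun _ _ => mem_univ _]
    simp [hfiber, mul_comm]
  have hm' : #{a | f a = 0} = m := Nat.eq_of_mul_eq_mul_right Fintype.card_pos (hcard ▸ hm)
  rw [sum_comp, image_univ_of_surjective hf, smul_sum]
  simp [hfiber, hm']

lemma exceptionalSumCount_succ_of_surjective {R S : Type*} [CommRing R] [CommRing S] [Fintype R]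
    [Fintype S] (f : R →+* S) [IsLocalHom f] (hf : Function.Surjective f) {m : ℕ}
    (hm : Fintype.card R = m * Fintype.card S) (k : ℕ) (c : R) :
    exceptionalSumCount R (k + 1) c = m ^ k * exceptionalSumCount S (k + 1) (f c) := by
  classical
  induction k generalizing c with
  | zero => simp [exceptionalSumCount_one, isExceptionalUnit_map_iff]
  | succ k ih =>
    let g : S → ℕ := fun b =>
      if IsExceptionalUnit b then m ^ k * exceptionalSumCount S (k + 1) (f c - b) else 0
    calc exceptionalSumCount R (k + 1 + 1) c = ∑ a, g (f a) := by
          simp [g, exceptionalSumCount_succ (k := k + 1), ih, isExceptionalUnit_map_iff]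
      _ = m • ∑ b, g b := f.toAddMonoidHom.sum_comp_of_surjective hf hm g
      _ = m ^ (k + 1) * exceptionalSumCount S (k + 1 + 1) (f c) := by
          simp [g, exceptionalSumCount_succ (k := k + 1), mul_sum, pow_succ, mul_assoc,
            mul_left_comm]

lemma sum_range_succ_ite_natCast_eq_choose {R : Type*} [AddGroupWithOne R] [DecidableEq R]
    (k : ℕ) (c : R) :
    ∑ j ∈ range (k + 2), (if (j : R) = c then ((k + 1).choose j : ℚ) else 0) =
      ∑ j ∈ range (k + 1), (if (j : R) = c then (k.choose j : ℚ) else 0) +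
        ∑ j ∈ range (k + 1), (if (j : R) = c - 1 then (k.choose j : ℚ) else 0) := by
  have h := sum_choose_succ_mul (R := ℚ) (fun i _ => if (i : R) = c then 1 else 0) k
  simp only [mul_ite, mul_one, mul_zero, Nat.cast_succ, ← eq_sub_iff_add_eq] at h
  exact h

section Field

variable {F : Type*} [Field F]

lemma isExceptionalUnit_iff_ne_zero_and_ne_one {a : F} :
    IsExceptionalUnit a ↔ a ≠ 0 ∧ a ≠ 1 := by
  rw [IsExceptionalUnit, isUnit_iff_ne_zero, mul_ne_zero_iff, sub_ne_zero, ne_comm (a := (1 : F))]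

variable [Fintype F]

open Classical in
lemma sum_ite_isExceptionalUnit {M : Type*} [AddCommGroup M] (g : F → M) :
    ∑ a, (if IsExceptionalUnit a then g a else 0) = ∑ a, g a - g 0 - g 1 := by
  have hcompl : ({a | ¬IsExceptionalUnit a} : Finset F) = {0, 1} := by
    ext a
    simp [isExceptionalUnit_iff_ne_zero_and_ne_one, or_iff_not_imp_left]
  rw [← sum_filter, ← sum_filter_add_sum_filter_not univ IsExceptionalUnit g, hcompl,
    sum_pair zero_ne_one]
  abel

lemma sum_exceptionalSumCount (k : ℕ) :
    ∑ c : F, (exceptionalSumCount F k c : ℚ) = ((Fintype.card F : ℚ) - 2) ^ k := by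
  classical
  induction k with
  | zero => simp [exceptionalSumCount_zero]
  | succ k ih =>
    have hshift : ∀ a : F,
        ∑ c, (exceptionalSumCount F k (c - a) : ℚ) = ((Fintype.card F : ℚ) - 2) ^ k :=
      fun a => ((Equiv.subRight a).sum_comp _).trans ih
    simp only [exceptionalSumCount_succ, Nat.cast_sum, Nat.cast_ite, Nat.cast_zero]
    rw [sum_comm]
    simp only [sum_ite_irrel, sum_const_zero, hshift, sum_ite_isExceptionalUnit, sum_const,
      card_univ, nsmul_eq_mul]
    ring

lemma exceptionalSumCount_eq_of_field [DecidableEq F] (k : ℕ) (c : F) :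
    (exceptionalSumCount F k c : ℚ) = (-1) ^ k *
      ((Fintype.card F : ℚ) *
          ∑ j ∈ range (k + 1), (if (j : F) = c then (k.choose j : ℚ) else 0) +
        (2 - Fintype.card F) ^ k - 2 ^ k) / Fintype.card F := by
  set q : ℚ := (Fintype.card F : ℚ)
  have hq : q ≠ 0 := Nat.cast_ne_zero.mpr Fintype.card_ne_zero
  induction k generalizing c with
  | zero =>
    rw [exceptionalSumCount_zero]
    by_cases hc : c = 0 <;> simp [hc, hq, eq_comm (a := (0 : F))]
  | succ k ih =>
    have hrec : (exceptionalSumCount F (k + 1) c : ℚ) =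
        (q - 2) ^ k - exceptionalSumCount F k c - exceptionalSumCount F k (c - 1) := by
      classical
      simp only [exceptionalSumCount_succ, Nat.cast_sum, Nat.cast_ite, Nat.cast_zero]
      rw [sum_ite_isExceptionalUnit, sub_zero,
        Fintype.sum_equiv (Equiv.subLeft c) (fun a => (exceptionalSumCount F k (c - a) : ℚ))
          (fun b => (exceptionalSumCount F k b : ℚ)) fun _ => rfl,
        sum_exceptionalSumCount]
    have hsign : (q - 2) ^ k = (-1) ^ k * (2 - q) ^ k := by rw [← mul_pow]; ring
    rw [hrec, ih, ih, sum_range_succ_ite_natCast_eq_choose, hsign]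
    field_simp
    ring

end Field

namespace ZMod

lemma isUnit_intCast_iff_gcd_eq_one {n : ℕ} (t : ℤ) : IsUnit (t : ZMod n) ↔ Int.gcd t n = 1 := by
  rw [coe_int_isUnit_iff_isCoprime, isCoprime_comm, Int.isCoprime_iff_gcd_eq_one]

lemma isLocalHom_castHom_pow {p e : ℕ} [NeZero p] (he : e ≠ 0) :
    IsLocalHom (castHom (dvd_pow_self p he) (ZMod p)) := by
  refine ⟨fun x hx => ?_⟩
  rw [← natCast_zmod_val x, map_natCast, isUnit_iff_coprime] at hx
  rwa [← natCast_zmod_val x, isUnit_iff_coprime, Nat.coprime_pow_right_iff (Nat.pos_of_ne_zero he)]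

end ZMod

lemma exceptionalSumCount_zmod_pow_succ {p e : ℕ} [NeZero p] (he : e ≠ 0) (k : ℕ) (c : ℤ) :
    exceptionalSumCount (ZMod (p ^ e)) (k + 1) c =
      p ^ ((e - 1) * k) * exceptionalSumCount (ZMod p) (k + 1) c := by
  have := ZMod.isLocalHom_castHom_pow (p := p) he
  have hcard : Fintype.card (ZMod (p ^ e)) = p ^ (e - 1) * Fintype.card (ZMod p) := by
    rw [ZMod.card, ZMod.card, ← pow_succ, Nat.sub_add_cancel (Nat.pos_of_ne_zero he)]
  rw [exceptionalSumCount_succ_of_surjective _ (ZMod.castHom_surjective _) hcard, map_intCast,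
    pow_mul]

lemma exceptionalSumCount_zmod_eq_prod {n : ℕ} (hn : n ≠ 0) (k : ℕ) (c : ℤ) :
    exceptionalSumCount (ZMod n) k c =
      ∏ p ∈ n.primeFactors, exceptionalSumCount (ZMod (p ^ n.factorization p)) k c := by
  rw [← exceptionalSumCount_ringEquiv (ZMod.equivPi n hn), map_intCast, exceptionalSumCount_pi,
    ← prod_coe_sort n.primeFactors]
  rfl

lemma card_int_tuples_eq_exceptionalSumCount {n : ℕ} [NeZero n] (k : ℕ) (c : ℤ) :
    Nat.card {x : Fin k → ℤ //
        (∀ i, 0 ≤ x i ∧ x i < n ∧ Int.gcd (x i * (1 - x i)) n = 1) ∧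
        (n : ℤ) ∣ (∑ i, x i) - c} = exceptionalSumCount (ZMod n) k c := by
  refine Nat.card_congr
    { toFun := fun x => ⟨fun i => (x.1 i : ZMod n), fun i => ?_, ?_⟩
      invFun := fun y => ⟨fun i => ((y.1 i).val : ℤ), fun i => ⟨?_, ?_, ?_⟩, ?_⟩
      left_inv := fun x => ?_
      right_inv := fun y => ?_ }
  · have := (x.2.1 i).2.2
    rw [← ZMod.isUnit_intCast_iff_gcd_eq_one] at this
    push_cast at this
    exact this
  · rw [← Int.cast_sum]
    exact (ZMod.intCast_eq_intCast_iff_dvd_sub _ c n).mpr (dvd_sub_comm.mp x.2.2)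
  · positivity
  · exact Int.ofNat_lt.mpr (y.1 i).val_lt
  · rw [← ZMod.isUnit_intCast_iff_gcd_eq_one]
    push_cast
    rw [ZMod.natCast_zmod_val]
    exact y.2.1 i
  · rw [← ZMod.intCast_eq_intCast_iff_dvd_sub]
    push_cast
    simp only [ZMod.natCast_zmod_val, y.2.2]
  · ext i
    exact (ZMod.val_intCast _).trans (Int.emod_eq_of_lt (x.2.1 i).1 (x.2.1 i).2.1)
  · ext i
    simp

lemma exceptionalSumCount_zmod_prime_pow {p e : ℕ} (hp : p.Prime) (he : e ≠ 0) {k : ℕ}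
    (hk : k ≠ 0) (c : ℤ) :
    (exceptionalSumCount (ZMod (p ^ e)) k c : ℚ) =
      (-1) ^ k * ((p : ℚ) ^ ((k : ℤ) * e - e - k) *
        ((p : ℚ) * ∑ j ∈ range (k + 1), (if (p : ℤ) ∣ (j : ℤ) - c then (k.choose j : ℚ) else 0) +
          (2 - (p : ℚ)) ^ k - 2 ^ k)) := by
  have : Fact p.Prime := ⟨hp⟩
  obtain ⟨m, rfl⟩ := Nat.exists_eq_succ_of_ne_zero hk
  have hdvd (j : ℕ) : (j : ZMod p) = (c : ZMod p) ↔ (p : ℤ) ∣ (j : ℤ) - c := by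
    rw [eq_comm, ← Int.cast_natCast, ZMod.intCast_eq_intCast_iff_dvd_sub]
  have hexp : ((m.succ : ℕ) : ℤ) * e - e - (m.succ : ℕ) = (((e - 1) * m : ℕ) : ℤ) - 1 := by
    push_cast [Nat.cast_sub (Nat.one_le_iff_ne_zero.mpr he)]
    ring
  rw [exceptionalSumCount_zmod_pow_succ he, Nat.cast_mul, Nat.cast_pow,
    exceptionalSumCount_eq_of_field, ZMod.card, hexp, zpow_sub_one₀ (by exact_mod_cast hp.ne_zero),
    zpow_natCast]
  simp only [hdvd]
  field_simp

theorem count_sum_exceptional_units (n : ℕ) (hn : 0 < n) (k : ℕ) (hk : 2 ≤ k) (c : ℤ) :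
    (Nat.card {x : Fin k → ℤ //
        (∀ i, 0 ≤ x i ∧ x i < n ∧ Int.gcd (x i * (1 - x i)) n = 1) ∧
        (n : ℤ) ∣ (∑ i, x i) - c} : ℚ) =
      (-1 : ℚ) ^ (k * n.primeFactors.card) *
        ∏ p ∈ n.primeFactors,
          (p : ℚ) ^ ((k : ℤ) * (n.factorization p) - (n.factorization p) - k) *
            ((p : ℚ) *
              (∑ j ∈ Finset.range (k + 1),
                if (p : ℤ) ∣ ((j : ℤ) - c) then (k.choose j : ℚ) else 0) +
              (2 - (p : ℚ)) ^ k - 2 ^ k) := by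
  have : NeZero n := ⟨hn.ne'⟩
  rw [card_int_tuples_eq_exceptionalSumCount, exceptionalSumCount_zmod_eq_prod hn.ne',
    Nat.cast_prod, pow_mul, ← prod_const, ← prod_mul_distrib]
  refine prod_congr rfl fun p hp => ?_
  have hp' := Nat.prime_of_mem_primeFactors hp
  exact exceptionalSumCount_zmod_prime_pow hp'
    (hp'.factorization_pos_of_dvd hn.ne' (Nat.dvd_of_mem_primeFactors hp)).ne' (by omega) c
end
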